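/- For every integer r ≥ 2, the function g_r : [0,1] → ℝ defined by g_r(x) = ∫ tanh( s_r(x) + √(s_r(x))·z ) dγ(z), where s_r(x) = ( (1+x)^{r−1} − (1−x)^{r−1} ) / (2(r−1)) and γ is the standard Gaussian measure on ℝ, is strictly increasing and continuously differentiable on [0,1]. -/

import Mathlib

/-!
Write `T = tanh (μ + √μ Z)` with `Z` standard Gaussian and `M μ = E T`, so that `g r = M ∘ s r`.
On `[0, 1]` the polynomial `s r` is nonnegative and strictly increasing, so it suffices that `M` is
strictly increasing and `C¹` on `[0, ∞)`. For `μ > 0`, differentiating under the integral gives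
`M' μ = E[(1 - T²)(1 + Z / (2√μ))]`, and Stein's lemma `E[Z G(Z)] = E[G'(Z)]` rewrites the
`Z`-term, leaving `M' μ = E[(1 - T²)(1 - T)] > 0`. This expression is continuous on `[0, ∞)`, so
it is also the one-sided derivative at `0`.
-/

open ProbabilityTheory MeasureTheory

/-- `s_r(x) = ((1+x)^{r−1} − (1−x)^{r−1}) / (2(r−1))`. -/
noncomputable def s (r : ℕ) (x : ℝ) : ℝ :=
  ((1 + x) ^ (r - 1) - (1 - x) ^ (r - 1)) / (2 * ((r : ℝ) - 1))

/-- `g_r(x) = ∫ tanh(s_r(x) + √(s_r(x))·z) dγ(z)`, `γ` the standard Gaussian. -/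
noncomputable def g (r : ℕ) (x : ℝ) : ℝ :=
  ∫ z, Real.tanh (s r x + Real.sqrt (s r x) * z) ∂(gaussianReal 0 1)

open Real Set

namespace Real

theorem hasDerivAt_tanh (x : ℝ) : HasDerivAt tanh (1 - tanh x ^ 2) x := by
  have h := (hasDerivAt_sinh x).div (hasDerivAt_cosh x) (cosh_pos x).ne'
  rw [show tanh = sinh / cosh from funext tanh_eq_sinh_div_cosh]
  refine h.congr_deriv ?_
  rw [Pi.div_apply]
  field_simp

@[fun_prop]
theorem continuous_tanh : Continuous tanh :=
  continuous_iff_continuousAt.2 fun x => (hasDerivAt_tanh x).continuousAt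

theorem one_sub_tanh_sq_pos (x : ℝ) : 0 < 1 - tanh x ^ 2 := by
  linarith [tanh_sq_lt_one x]

theorem abs_one_sub_tanh_sq_le_one (x : ℝ) : |1 - tanh x ^ 2| ≤ 1 := by
  rw [abs_of_pos (one_sub_tanh_sq_pos x)]
  linarith [sq_nonneg (tanh x)]

theorem abs_one_sub_tanh_sq_mul_one_sub_tanh_le_two (x : ℝ) :
    |(1 - tanh x ^ 2) * (1 - tanh x)| ≤ 2 := by
  have h := abs_le.1 (abs_tanh_lt_one x).le
  rw [abs_mul, abs_of_pos (one_sub_tanh_sq_pos x), abs_of_nonneg (by linarith)]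
  nlinarith [sq_nonneg (tanh x)]

theorem abs_tanh_mul_one_sub_tanh_sq_le_one (x : ℝ) : |tanh x * (1 - tanh x ^ 2)| ≤ 1 := by
  rw [abs_mul]
  exact mul_le_one₀ (abs_tanh_lt_one x).le (abs_nonneg _) (abs_one_sub_tanh_sq_le_one x)

end Real

namespace ProbabilityTheory

theorem hasDerivAt_gaussianPDFReal_zero_one (z : ℝ) :
    HasDerivAt (gaussianPDFReal 0 1) (-z * gaussianPDFReal 0 1 z) z := by
  have h : HasDerivAt (fun y : ℝ => -y ^ 2 / 2) (-z) z :=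
    ((hasDerivAt_pow 2 z).neg.div_const 2).congr_deriv (by ring)
  simp only [gaussianPDFReal_def, sub_zero, NNReal.coe_one, mul_one]
  exact (h.exp.const_mul _).congr_deriv (by ring)

theorem integrable_gaussianReal_iff {μ : ℝ} {v : NNReal} (hv : v ≠ 0) {f : ℝ → ℝ} :
    Integrable f (gaussianReal μ v) ↔ Integrable (fun z => gaussianPDFReal μ v z * f z) := by
  rw [gaussianReal_of_var_ne_zero μ hv, integrable_withDensity_iff_integrable_smul'
    (measurable_gaussianPDF μ v) (ae_of_all _ fun _ => gaussianPDF_lt_top)]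
  simp [gaussianPDF, ENNReal.toReal_ofReal (gaussianPDFReal_nonneg μ v _)]

theorem integral_mul_eq_integral_deriv_gaussianReal {G G' : ℝ → ℝ} {C : ℝ}
    (hG : ∀ z, HasDerivAt G (G' z) z) (hG_le : ∀ z, |G z| ≤ C)
    (hG' : Integrable G' (gaussianReal 0 1)) :
    ∫ z, z * G z ∂gaussianReal 0 1 = ∫ z, G' z ∂gaussianReal 0 1 := by
  set φ := gaussianPDFReal 0 1
  have hGc : Continuous G := continuous_iff_continuousAt.2 fun z => (hG z).continuousAt
  have hG_int : Integrable G (gaussianReal 0 1) :=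
    .of_bound hGc.aestronglyMeasurable C (ae_of_all _ hG_le)
  have hzG_int : Integrable (fun z => z * G z) (gaussianReal 0 1) := by
    refine (((memLp_id_gaussianReal 1).integrable le_rfl).norm.const_mul C).mono'
      (by fun_prop) (ae_of_all _ fun z => ?_)
    simpa [abs_mul, mul_comm C] using mul_le_mul_of_nonneg_left (hG_le z) (abs_nonneg z)
  rw [integrable_gaussianReal_iff one_ne_zero] at hG' hG_int hzG_int
  have hparts := integral_mul_deriv_eq_deriv_mul_of_integrable (u := G) (v := φ)
    (v' := fun z => -z * φ z) (fun z _ => hG z)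
    (fun z _ => hasDerivAt_gaussianPDFReal_zero_one z)
    (hzG_int.neg.congr (ae_of_all _ fun z => by simp only [Pi.neg_apply, Pi.mul_apply, φ]; ring))
    (hG'.congr (ae_of_all _ fun z => by simp [φ, mul_comm]))
    (hG_int.congr (ae_of_all _ fun z => by simp [φ, mul_comm]))
  simp only [integral_gaussianReal_eq_integral_smul one_ne_zero, smul_eq_mul]
  calc ∫ z, φ z * (z * G z) = -∫ z, G z * (-z * φ z) := by
        rw [← integral_neg]
        congr 1 with z
        ring
    _ = ∫ z, φ z * G' z := by
        rw [hparts, neg_neg]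
        congr 1 with z
        ring

end ProbabilityTheory

noncomputable def meanTanh (μ : ℝ) : ℝ :=
  ∫ z, tanh (μ + √μ * z) ∂gaussianReal 0 1

noncomputable def meanTanhDeriv (μ : ℝ) : ℝ :=
  ∫ z, (1 - tanh (μ + √μ * z) ^ 2) * (1 - tanh (μ + √μ * z)) ∂gaussianReal 0 1

theorem continuous_meanTanh : Continuous meanTanh :=
  continuous_of_dominated (bound := fun _ => 1) (fun _ => by fun_prop)
    (fun μ => ae_of_all _ fun z => (abs_tanh_lt_one _).le) (integrable_const 1)
    (ae_of_all _ fun z => by fun_prop)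

theorem continuous_meanTanhDeriv : Continuous meanTanhDeriv :=
  continuous_of_dominated (bound := fun _ => 2) (fun _ => by fun_prop)
    (fun μ => ae_of_all _ fun z => abs_one_sub_tanh_sq_mul_one_sub_tanh_le_two _)
    (integrable_const 2) (ae_of_all _ fun z => by fun_prop)

theorem meanTanhDeriv_pos (μ : ℝ) : 0 < meanTanhDeriv μ := by
  have hpos : ∀ x : ℝ, 0 < (1 - tanh x ^ 2) * (1 - tanh x) := fun x =>
    mul_pos (one_sub_tanh_sq_pos x) (by linarith [tanh_lt_one x])
  have hint : Integrable (fun z => (1 - tanh (μ + √μ * z) ^ 2) * (1 - tanh (μ + √μ * z)))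
      (gaussianReal 0 1) :=
    .of_bound (by fun_prop) 2 (ae_of_all _ fun z => abs_one_sub_tanh_sq_mul_one_sub_tanh_le_two _)
  rw [meanTanhDeriv, integral_pos_iff_support_of_nonneg (fun z => (hpos _).le) hint,
    Function.support_eq_univ fun z => (hpos _).ne']
  simp

theorem integral_mul_one_sub_tanh_sq_gaussianReal (a b : ℝ) :
    ∫ z, z * (1 - tanh (a + b * z) ^ 2) ∂gaussianReal 0 1 =
      -(2 * b) * ∫ z, tanh (a + b * z) * (1 - tanh (a + b * z) ^ 2) ∂gaussianReal 0 1 := by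
  rw [← integral_const_mul]
  refine integral_mul_eq_integral_deriv_gaussianReal (fun z => ?_)
    (fun z => abs_one_sub_tanh_sq_le_one _) ((Integrable.of_bound (by fun_prop) 1
      (ae_of_all _ fun z => abs_tanh_mul_one_sub_tanh_sq_le_one _)).const_mul _)
  have hlin : HasDerivAt (fun z => a + b * z) b z := by
    simpa using ((hasDerivAt_id z).const_mul b).const_add a
  refine (((hasDerivAt_tanh _).comp z hlin).fun_pow 2).const_sub 1 |>.congr_deriv ?_
  simp only [Function.comp_apply]
  ring

theorem hasDerivAt_meanTanh_of_pos {μ : ℝ} (hμ : 0 < μ) :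
    HasDerivAt meanTanh
      (∫ z, (1 - tanh (μ + √μ * z) ^ 2) * (1 + 1 / (2 * √μ) * z) ∂gaussianReal 0 1) μ := by
  have hμ2 : 0 < μ / 2 := half_pos hμ
  refine (hasDerivAt_integral_of_dominated_loc_of_deriv_le (Metric.ball_mem_nhds μ hμ2)
    (F' := fun x z => (1 - tanh (x + √x * z) ^ 2) * (1 + 1 / (2 * √x) * z))
    (bound := fun z => 1 + 1 / (2 * √(μ / 2)) * |z|)
    (.of_forall fun x => by fun_prop) (.of_bound (by fun_prop) 1
      (ae_of_all _ fun z => (abs_tanh_lt_one _).le)) (by fun_prop)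
    (ae_of_all _ fun z x hx => ?_)
    ((integrable_const 1).add
      (((memLp_id_gaussianReal 1).integrable le_rfl).norm.const_mul _))
    (ae_of_all _ fun z x hx => ?_)).2
  all_goals
    have hx : μ / 2 < x := by
      rw [Metric.mem_ball, Real.dist_eq, abs_lt] at hx
      linarith
  · have hc : 1 / (2 * √x) ≤ 1 / (2 * √(μ / 2)) := by
      gcongr
    rw [Real.norm_eq_abs, abs_mul]
    calc |1 - tanh (x + √x * z) ^ 2| * |1 + 1 / (2 * √x) * z|
        ≤ 1 * (1 + 1 / (2 * √x) * |z|) := by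
          gcongr
          · exact abs_one_sub_tanh_sq_le_one _
          · refine (abs_add_le _ _).trans ?_
            rw [abs_one, abs_mul, abs_of_nonneg (by positivity : 0 ≤ 1 / (2 * √x))]
      _ ≤ 1 + 1 / (2 * √(μ / 2)) * |z| := by
          rw [one_mul]
          gcongr
  · have hinner : HasDerivAt (fun x => x + √x * z) (1 + 1 / (2 * √x) * z) x :=
      (hasDerivAt_id x).add ((hasDerivAt_sqrt (by linarith)).mul_const z)
    exact (hasDerivAt_tanh _).comp x hinner

theorem hasDerivAt_meanTanh {μ : ℝ} (hμ : 0 < μ) : HasDerivAt meanTanh (meanTanhDeriv μ) μ := by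
  refine (hasDerivAt_meanTanh_of_pos hμ).congr_deriv ?_
  set T := fun z => tanh (μ + √μ * z)
  have hA : Integrable (fun z => 1 - T z ^ 2) (gaussianReal 0 1) :=
    .of_bound (by fun_prop) 1 (ae_of_all _ fun z => abs_one_sub_tanh_sq_le_one _)
  have hB : Integrable (fun z => z * (1 - T z ^ 2)) (gaussianReal 0 1) := by
    refine ((memLp_id_gaussianReal 1).integrable le_rfl).norm.mono' (by fun_prop)
      (ae_of_all _ fun z => ?_)
    rw [Real.norm_eq_abs, abs_mul]
    exact mul_le_of_le_one_right (abs_nonneg z) (abs_one_sub_tanh_sq_le_one _)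
  have hC : Integrable (fun z => T z * (1 - T z ^ 2)) (gaussianReal 0 1) :=
    .of_bound (by fun_prop) 1 (ae_of_all _ fun z => abs_tanh_mul_one_sub_tanh_sq_le_one _)
  have hsqrt : 0 < √μ := sqrt_pos.2 hμ
  calc ∫ z, (1 - T z ^ 2) * (1 + 1 / (2 * √μ) * z) ∂gaussianReal 0 1
      = ∫ z, 1 - T z ^ 2 ∂gaussianReal 0 1
          + 1 / (2 * √μ) * ∫ z, z * (1 - T z ^ 2) ∂gaussianReal 0 1 := by
        rw [← integral_const_mul, ← integral_add hA (hB.const_mul _)]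
        congr 1 with z
        ring
    _ = ∫ z, 1 - T z ^ 2 ∂gaussianReal 0 1 - ∫ z, T z * (1 - T z ^ 2) ∂gaussianReal 0 1 := by
        rw [integral_mul_one_sub_tanh_sq_gaussianReal]
        field_simp
        ring
    _ = meanTanhDeriv μ := by
        rw [← integral_sub hA hC]
        congr 1 with z
        ring

theorem hasDerivWithinAt_meanTanh {μ : ℝ} (hμ : 0 ≤ μ) :
    HasDerivWithinAt meanTanh (meanTanhDeriv μ) (Ici 0) μ := by
  rcases hμ.lt_or_eq with hμ | rfl
  · exact (hasDerivAt_meanTanh hμ).hasDerivWithinAt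
  refine hasDerivWithinAt_Ici_of_tendsto_deriv
    (fun x hx => (hasDerivAt_meanTanh hx).differentiableAt.differentiableWithinAt)
    continuous_meanTanh.continuousWithinAt self_mem_nhdsWithin ?_
  refine (continuous_meanTanhDeriv.tendsto 0).mono_left nhdsWithin_le_nhds |>.congr' ?_
  filter_upwards [self_mem_nhdsWithin] with x hx
  exact (hasDerivAt_meanTanh hx).deriv.symm

theorem strictMonoOn_meanTanh : StrictMonoOn meanTanh (Ici 0) :=
  strictMonoOn_of_deriv_pos (convex_Ici 0) continuous_meanTanh.continuousOn fun x hx => by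
    rw [interior_Ici] at hx
    exact (hasDerivAt_meanTanh hx).deriv ▸ meanTanhDeriv_pos x

theorem contDiffOn_meanTanh : ContDiffOn ℝ 1 meanTanh (Ici 0) := by
  rw [contDiffOn_one_iff_derivWithin (uniqueDiffOn_Ici 0)]
  exact ⟨fun x hx => (hasDerivWithinAt_meanTanh hx).differentiableWithinAt,
    continuous_meanTanhDeriv.continuousOn.congr fun x hx =>
      (hasDerivWithinAt_meanTanh hx).derivWithin (uniqueDiffOn_Ici 0 x hx)⟩

theorem contDiff_s (r : ℕ) {n : WithTop ℕ∞} : ContDiff ℝ n (s r) := by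
  unfold s
  fun_prop

theorem strictMonoOn_s {r : ℕ} (hr : 2 ≤ r) : StrictMonoOn (s r) (Icc (-1) 1) := by
  intro x hx y hy hxy
  have hden : (0 : ℝ) < 2 * ((r : ℝ) - 1) := by
    have : (2 : ℝ) ≤ r := by exact_mod_cast hr
    linarith
  have hplus : (1 + x) ^ (r - 1) < (1 + y) ^ (r - 1) :=
    pow_lt_pow_left₀ (by linarith) (by linarith [hx.1]) (by omega)
  have hminus : (1 - y) ^ (r - 1) ≤ (1 - x) ^ (r - 1) :=
    pow_le_pow_left₀ (by linarith [hy.2]) (by linarith) _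
  exact div_lt_div_of_pos_right (by linarith) hden

theorem mapsTo_s_Icc_Ici {r : ℕ} (hr : 2 ≤ r) : MapsTo (s r) (Icc 0 1) (Ici 0) := by
  intro x hx
  have hs0 : s r 0 = 0 := by simp [s]
  rw [mem_Ici, ← hs0]
  exact (strictMonoOn_s hr).monotoneOn (by norm_num) (Icc_subset_Icc_left (by norm_num) hx) hx.1

theorem g_eq_meanTanh_comp_s (r : ℕ) : g r = meanTanh ∘ s r := rfl

/-- Lemma F.2: for every integer `r ≥ 2`, `g_r` is strictly increasing and continuously
differentiable on `[0,1]`. -/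
theorem stmt12 (r : ℕ) (hr : 2 ≤ r) :
    StrictMonoOn (g r) (Set.Icc 0 1) ∧ ContDiffOn ℝ 1 (g r) (Set.Icc 0 1) := by
  have hmaps := mapsTo_s_Icc_Ici hr
  rw [g_eq_meanTanh_comp_s]
  exact ⟨strictMonoOn_meanTanh.comp ((strictMonoOn_s hr).mono (Icc_subset_Icc_left (by norm_num)))
      hmaps, contDiffOn_meanTanh.comp (contDiff_s r).contDiffOn hmaps⟩
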